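/- For every integer ℓ ≥ 1, one has P¹_x(2^ℓ) = 4, Δ₀(2^ℓ) = 2, M₀(2^{ℓ+1}) = 2^ℓ − m₀(2^ℓ), and m₀(2^{ℓ+1}) = 2^ℓ − M₀(2^ℓ). -/

import Mathlib

/-- The 2-kernel of a sequence `s : ℕ → ℤ`. -/
def kernel2 (s : ℕ → ℤ) : Set (ℕ → ℤ) :=
  {t | ∃ i j : ℕ, j < 2 ^ i ∧ t = fun n => s (2 ^ i * n + j)}

/-- A sequence is 2-regular if the ℤ-module spanned by its 2-kernel is finitely generated. -/
def IsTwoRegular (s : ℕ → ℤ) : Prop :=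
  (Submodule.span ℤ (kernel2 s)).FG

/-- A sequence is 2-automatic if its 2-kernel is finite. -/
def IsTwoAutomatic (s : ℕ → ℤ) : Prop :=
  (kernel2 s).Finite

/-- The period-doubling word, fixed point (starting with 0) of 0 ↦ 01, 1 ↦ 00:
its `n`-th letter is the parity of the 2-adic valuation of `n+1`. -/
def pd (n : ℕ) : ℕ := (n + 1).factorization 2 % 2

/-- The Thue–Morse word, fixed point (starting with 0) of 0 ↦ 01, 1 ↦ 10:
its `n`-th letter is the parity of the binary digit sum of `n`. -/
def tm (n : ℕ) : ℕ := (Nat.digits 2 n).sum % 2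

/-- The 2-block coding `x = block(p, 2)` of the period-doubling word. -/
def xw (n : ℕ) : ℕ := 2 * pd n + pd (n + 1)

/-- The 2-block coding `y = block(t, 2)` of the Thue–Morse word. -/
def yw (n : ℕ) : ℕ := 2 * tm n + tm (n + 1)

/-- The factor of an infinite word `w` of length `len` occurring at position `i`. -/
def factorAt (w : ℕ → ℕ) (i len : ℕ) : List ℕ :=
  (List.range len).map fun k => w (i + k)

/-- `u` is a factor of the infinite word `w`. -/
def IsFactor (w : ℕ → ℕ) (u : List ℕ) : Prop :=
  ∃ i, u = factorAt w i u.length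

/-- Maximal number of 0's in a factor of `x` of length `n`. -/
noncomputable def M0 (n : ℕ) : ℕ := sSup {k | ∃ i, (factorAt xw i n).count 0 = k}

/-- Minimal number of 0's in a factor of `x` of length `n`. -/
noncomputable def m0 (n : ℕ) : ℕ := sInf {k | ∃ i, (factorAt xw i n).count 0 = k}

noncomputable def D0 (n : ℕ) : ℕ := M0 n - m0 n

/-- Maximal number of 2's in a factor of `x` of length `n`. -/
noncomputable def M2c (n : ℕ) : ℕ := sSup {k | ∃ i, (factorAt xw i n).count 2 = k}

/-- Minimal number of 2's in a factor of `x` of length `n`. -/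
noncomputable def m2c (n : ℕ) : ℕ := sInf {k | ∃ i, (factorAt xw i n).count 2 = k}

/-- The max-jump function for `M0`. -/
noncomputable def JM0 : ℕ → ℕ
  | 0 => 0
  | n + 1 => if M0 n < M0 (n + 1) then 1 else 0

/-- The min-jump function for `m0`. -/
noncomputable def jm0 (n : ℕ) : ℕ := if m0 n < m0 (n + 1) then 1 else 0

/-- Maximal total number of 1's and 2's in a factor of `y` of length `n`. -/
noncomputable def M12 (n : ℕ) : ℕ :=
  sSup {k | ∃ i, (factorAt yw i n).count 1 + (factorAt yw i n).count 2 = k}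

/-- Minimal total number of 1's and 2's in a factor of `y` of length `n`. -/
noncomputable def m12 (n : ℕ) : ℕ :=
  sInf {k | ∃ i, (factorAt yw i n).count 1 + (factorAt yw i n).count 2 = k}

noncomputable def D12 (n : ℕ) : ℕ := M12 n - m12 n

/-- Maximal total number of 0's and 3's in a factor of `y` of length `n`. -/
noncomputable def M03 (n : ℕ) : ℕ :=
  sSup {k | ∃ i, (factorAt yw i n).count 0 + (factorAt yw i n).count 3 = k}

/-- Minimal total number of 0's and 3's in a factor of `y` of length `n`. -/
noncomputable def m03 (n : ℕ) : ℕ :=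
  sInf {k | ∃ i, (factorAt yw i n).count 0 + (factorAt yw i n).count 3 = k}

/-- The max-jump function for `M03`. -/
noncomputable def JM03 (n : ℕ) : ℕ := if M03 (n - 1) < M03 n then 1 else 0

/-- The min-jump function for `m03`. -/
noncomputable def jm03 (n : ℕ) : ℕ := if m03 n < m03 (n + 1) then 1 else 0

/-- Abelian complexity: the number of abelian equivalence classes (i.e. distinct
multisets of letters) of factors of `w` of length `n`. -/
noncomputable def abComplexity (w : ℕ → ℕ) (n : ℕ) : ℕ :=
  Set.ncard {m : Multiset ℕ | ∃ i, (↑(factorAt w i n) : Multiset ℕ) = m}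

/-- The number of occurrences of `v` as a factor of `u`. -/
def countFactor (u v : List ℕ) : ℕ :=
  ((List.range (u.length + 1 - v.length)).filter
    fun i => decide ((u.drop i).take v.length = v)).length

/-- 2-abelian complexity: the number of 2-abelian equivalence classes of factors of `w`
of length `n`, where two words are 2-abelian equivalent when every word of length at most 2
occurs equally often in both. -/
noncomputable def abel2Complexity (w : ℕ → ℕ) (n : ℕ) : ℕ :=
  Set.ncard {f : List ℕ → ℕ |
    ∃ i, f = fun v => if v.length ≤ 2 then countFactor (factorAt w i n) v else 0}

/-- The morphism φ : 0 ↦ 12, 1 ↦ 12, 2 ↦ 00. -/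
def phiL : ℕ → List ℕ
  | 0 => [1, 2]
  | 1 => [1, 2]
  | 2 => [0, 0]
  | _ => []

/-- The morphism τ : 0 ↦ 0, 1 ↦ 2, 2 ↦ 1. -/
def tauL : ℕ → ℕ
  | 1 => 2
  | 2 => 1
  | n => n

/-!
Write `p = pd`. The factor of `x` of length `n` at `i` has `pdSum i n` letters 2 (one for each 1
of `p[i, i+n)`), `pdSum (i + 1) n` letters 1 and no letter 3, so its Parikh vector is determined
by the pair `(pdSum (i + 1) n, pdSum i n)`. Since `p(2k) = 0` and `p(2k+1) = 1 - p(k)`, the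
factors of `p` of length `2n` at `2j` and `2j + 1` both contain `n - pdSum j n` ones; hence the
pairs at length `2n` are the images of those at length `n` under `(a, b) ↦ (n - b, n - b)` and
`(a, b) ↦ (n - a, n - b)`. Starting from `{(1,0), (0,1), (0,0)}` at `n = 1`, the pairs at
`n = 2^ℓ`, `ℓ ≥ 1`, form a full square `{q, q+1}²` with `q_{ℓ+1} = 2^ℓ - 1 - q_ℓ`, and all four
claims are read off from these squares.
-/

open Finset

lemma pd_le_one (n : ℕ) : pd n ≤ 1 := by
  unfold pd; omega

lemma pd_two_mul (n : ℕ) : pd (2 * n) = 0 := by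
  unfold pd
  rw [Nat.factorization_eq_zero_of_not_dvd (by omega)]

lemma pd_two_mul_add_one_add_pd (n : ℕ) : pd (2 * n + 1) + pd n = 1 := by
  unfold pd
  rw [show 2 * n + 1 + 1 = 2 * (n + 1) by ring,
    Nat.factorization_mul two_ne_zero n.succ_ne_zero]
  simp only [Nat.Prime.factorization Nat.prime_two, Nat.succ_eq_add_one, Finsupp.coe_add,
    Pi.add_apply, Finsupp.single_eq_same]
  omega

lemma pd_add_pd_succ_add_pd_div_two (i : ℕ) : pd i + pd (i + 1) + pd (i / 2) = 1 := by
  obtain ⟨j, rfl | rfl⟩ := Nat.even_or_odd' i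
  · have := pd_two_mul_add_one_add_pd j
    rw [pd_two_mul, show 2 * j / 2 = j by omega]
    omega
  · have := pd_two_mul_add_one_add_pd j
    rw [show 2 * j + 1 + 1 = 2 * (j + 1) by ring, pd_two_mul, show (2 * j + 1) / 2 = j by omega]
    omega

lemma pd_add_pd_succ_le_one (i : ℕ) : pd i + pd (i + 1) ≤ 1 := by
  have := pd_add_pd_succ_add_pd_div_two i
  omega

def pdSum (i n : ℕ) : ℕ := ∑ k ∈ range n, pd (i + k)

lemma pdSum_two_mul_add_pdSum_div_two (i n : ℕ) : pdSum i (2 * n) + pdSum (i / 2) n = n := by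
  induction n with
  | zero => simp [pdSum]
  | succ n ih =>
    have hpair := pd_add_pd_succ_add_pd_div_two (i + 2 * n)
    rw [show (i + 2 * n) / 2 = i / 2 + n by omega] at hpair
    simp only [pdSum, show 2 * (n + 1) = 2 * n + 1 + 1 by ring, sum_range_succ] at ih ⊢
    rw [show i + (2 * n + 1) = i + 2 * n + 1 by ring]
    omega

/-- The pairs (number of 1's, number of 2's) of the factors of `xw` of length `n`, see
`count_one_factorAt_xw` and `count_two_factorAt_xw`. -/
def pdSumPairs (n : ℕ) : Set (ℕ × ℕ) := Set.range fun i => (pdSum (i + 1) n, pdSum i n)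

lemma pdSumPairs_two_mul (n : ℕ) :
    pdSumPairs (2 * n) = (fun p : ℕ × ℕ => (n - p.2, n - p.2)) '' pdSumPairs n ∪
      (fun p : ℕ × ℕ => (n - p.1, n - p.2)) '' pdSumPairs n := by
  have hsum (i : ℕ) : pdSum i (2 * n) = n - pdSum (i / 2) n := by
    have := pdSum_two_mul_add_pdSum_div_two i n
    omega
  have heven (j : ℕ) : pdSum (2 * j) (2 * n) = n - pdSum j n := by
    rw [hsum, show 2 * j / 2 = j by omega]
  have hodd (j : ℕ) : pdSum (2 * j + 1) (2 * n) = n - pdSum j n := by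
    rw [hsum, show (2 * j + 1) / 2 = j by omega]
  have hodd' (j : ℕ) : pdSum (2 * j + 1 + 1) (2 * n) = n - pdSum (j + 1) n := by
    rw [hsum, show (2 * j + 1 + 1) / 2 = j + 1 by omega]
  ext p
  simp only [pdSumPairs, Set.mem_union, Set.mem_image, Set.mem_range, exists_exists_eq_and]
  constructor
  · rintro ⟨i, rfl⟩
    obtain ⟨j, rfl | rfl⟩ := Nat.even_or_odd' i
    · exact Or.inl ⟨j, by rw [heven, hodd]⟩
    · exact Or.inr ⟨j, by rw [hodd, hodd']⟩
  · rintro (⟨j, rfl⟩ | ⟨j, rfl⟩)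
    · exact ⟨2 * j, by rw [heven, hodd]⟩
    · exact ⟨2 * j + 1, by rw [hodd, hodd']⟩

lemma xw_lt_three (k : ℕ) : xw k < 3 := by
  have := pd_add_pd_succ_le_one k
  unfold xw; omega

lemma ite_xw_eq_two (k : ℕ) : (if xw k = 2 then 1 else 0) = pd k := by
  have := pd_add_pd_succ_le_one k
  have := pd_le_one k
  unfold xw; split <;> omega

lemma ite_xw_eq_one (k : ℕ) : (if xw k = 1 then 1 else 0) = pd (k + 1) := by
  have := pd_add_pd_succ_le_one k
  have := pd_le_one (k + 1)
  unfold xw; split <;> omega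

lemma ite_xw_eq_zero_add (k : ℕ) : (if xw k = 0 then 1 else 0) + pd k + pd (k + 1) = 1 := by
  have := pd_add_pd_succ_le_one k
  unfold xw; split <;> omega

lemma count_factorAt (w : ℕ → ℕ) (a i n : ℕ) :
    (factorAt w i n).count a = ∑ k ∈ range n, if w (i + k) = a then 1 else 0 := by
  induction n with
  | zero => rfl
  | succ n ih =>
    rw [sum_range_succ, ← ih]
    simp [factorAt, List.range_succ, List.count_singleton]

lemma count_two_factorAt_xw (i n : ℕ) : (factorAt xw i n).count 2 = pdSum i n := by
  rw [count_factorAt]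
  exact sum_congr rfl fun k _ => ite_xw_eq_two _

lemma count_one_factorAt_xw (i n : ℕ) : (factorAt xw i n).count 1 = pdSum (i + 1) n := by
  rw [count_factorAt]
  exact sum_congr rfl fun k _ => by rw [ite_xw_eq_one, add_right_comm]

lemma count_zero_factorAt_xw_add (i n : ℕ) :
    (factorAt xw i n).count 0 + pdSum i n + pdSum (i + 1) n = n := by
  rw [count_factorAt, pdSum, pdSum, ← sum_add_distrib, ← sum_add_distrib]
  simp only [add_right_comm i 1, ite_xw_eq_zero_add, sum_const, card_range, smul_eq_mul, mul_one]

lemma count_factorAt_xw_of_three_le {a : ℕ} (ha : 3 ≤ a) (i n : ℕ) :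
    (factorAt xw i n).count a = 0 := by
  rw [count_factorAt]
  exact sum_eq_zero fun k _ => if_neg (by have := xw_lt_three (i + k); omega)

lemma coe_factorAt_xw_eq {i j n : ℕ} (h₁ : pdSum (i + 1) n = pdSum (j + 1) n)
    (h₂ : pdSum i n = pdSum j n) : (factorAt xw i n : Multiset ℕ) = factorAt xw j n := by
  refine Multiset.coe_eq_coe.mpr (List.perm_iff_count.mpr fun a => ?_)
  match a with
  | 0 =>
    have := count_zero_factorAt_xw_add i n
    have := count_zero_factorAt_xw_add j n
    omega
  | 1 => rw [count_one_factorAt_xw, count_one_factorAt_xw, h₁]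
  | 2 => rw [count_two_factorAt_xw, count_two_factorAt_xw, h₂]
  | a + 3 => rw [count_factorAt_xw_of_three_le (by omega), count_factorAt_xw_of_three_le (by omega)]

theorem abComplexity_xw_eq_ncard_pdSumPairs (n : ℕ) :
    abComplexity xw n = (pdSumPairs n).ncard := by
  have himage : pdSumPairs n = (fun m : Multiset ℕ => (m.count 1, m.count 2)) ''
      {m | ∃ i, (factorAt xw i n : Multiset ℕ) = m} := by
    ext p
    simp [pdSumPairs, count_one_factorAt_xw, count_two_factorAt_xw]
  rw [himage, Set.InjOn.ncard_image, abComplexity]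
  rintro _ ⟨i, rfl⟩ _ ⟨j, rfl⟩ h
  simp only [Multiset.coe_count, count_one_factorAt_xw, count_two_factorAt_xw,
    Prod.mk.injEq] at h
  exact coe_factorAt_xw_eq h.1 h.2

lemma two_mul_add_two_le_of_pdSumPairs_eq {n q : ℕ}
    (h : pdSumPairs n = Set.Icc q (q + 1) ×ˢ Set.Icc q (q + 1)) : 2 * q + 2 ≤ n := by
  obtain ⟨i, hi⟩ : (q + 1, q + 1) ∈ pdSumPairs n := by simp [h]
  simp only [Prod.mk.injEq] at hi
  have := count_zero_factorAt_xw_add i n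
  omega

lemma M0_eq_of_pdSumPairs_eq {n q : ℕ}
    (h : pdSumPairs n = Set.Icc q (q + 1) ×ˢ Set.Icc q (q + 1)) : M0 n = n - 2 * q := by
  refine IsGreatest.csSup_eq ⟨?_, ?_⟩
  · obtain ⟨i, hi⟩ : (q, q) ∈ pdSumPairs n := by simp [h]
    simp only [Prod.mk.injEq] at hi
    have := count_zero_factorAt_xw_add i n
    exact ⟨i, by omega⟩
  · rintro _ ⟨i, rfl⟩
    have hi : (pdSum (i + 1) n, pdSum i n) ∈ pdSumPairs n := ⟨i, rfl⟩
    simp only [h, Set.mem_prod, Set.mem_Icc] at hi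
    have := count_zero_factorAt_xw_add i n
    omega

lemma m0_eq_of_pdSumPairs_eq {n q : ℕ}
    (h : pdSumPairs n = Set.Icc q (q + 1) ×ˢ Set.Icc q (q + 1)) : m0 n = n - 2 * q - 2 := by
  refine IsLeast.csInf_eq ⟨?_, ?_⟩
  · obtain ⟨i, hi⟩ : (q + 1, q + 1) ∈ pdSumPairs n := by simp [h]
    simp only [Prod.mk.injEq] at hi
    have := count_zero_factorAt_xw_add i n
    exact ⟨i, by omega⟩
  · rintro _ ⟨i, rfl⟩
    have hi : (pdSum (i + 1) n, pdSum i n) ∈ pdSumPairs n := ⟨i, rfl⟩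
    simp only [h, Set.mem_prod, Set.mem_Icc] at hi
    have := count_zero_factorAt_xw_add i n
    omega

lemma pdSumPairs_two_mul_of_eq {n q : ℕ}
    (h : pdSumPairs n = Set.Icc q (q + 1) ×ˢ Set.Icc q (q + 1)) :
    pdSumPairs (2 * n) =
      Set.Icc (n - 1 - q) (n - 1 - q + 1) ×ˢ Set.Icc (n - 1 - q) (n - 1 - q + 1) := by
  have hn := two_mul_add_two_le_of_pdSumPairs_eq h
  rw [pdSumPairs_two_mul, h]
  ext ⟨a, b⟩
  simp only [Set.mem_union, Set.mem_image, Set.mem_prod, Set.mem_Icc, Prod.exists,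
    Prod.mk.injEq]
  constructor
  · rintro (⟨x, y, hxy, rfl, rfl⟩ | ⟨x, y, hxy, rfl, rfl⟩) <;> omega
  · rintro hab
    exact Or.inr ⟨n - a, n - b, by omega, by omega, by omega⟩

lemma pdSumPairs_one : pdSumPairs 1 = {(1, 0), (0, 1), (0, 0)} := by
  have h0 : pd 0 = 0 := pd_two_mul 0
  have h1 : pd 1 = 1 := by have := pd_two_mul_add_one_add_pd 0; simp_all
  have h2 : pd 2 = 0 := pd_two_mul 1
  have h3 : pd 3 = 0 := by have := pd_two_mul_add_one_add_pd 1; simp_all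
  ext p
  simp only [pdSumPairs, pdSum, sum_range_one, add_zero, Set.mem_range, Set.mem_insert_iff,
    Set.mem_singleton_iff]
  constructor
  · rintro ⟨i, rfl⟩
    have := pd_add_pd_succ_le_one i
    have := pd_le_one i
    have := pd_le_one (i + 1)
    simp only [Prod.mk.injEq]
    omega
  · rintro (rfl | rfl | rfl)
    exacts [⟨0, by rw [h0, h1]⟩, ⟨1, by rw [h1, h2]⟩, ⟨2, by rw [h2, h3]⟩]

lemma pdSumPairs_two : pdSumPairs 2 = Set.Icc 0 1 ×ˢ Set.Icc 0 1 := by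
  rw [← mul_one 2, pdSumPairs_two_mul, pdSumPairs_one]
  ext ⟨a, b⟩
  simp only [Set.image_insert_eq, Set.image_singleton, Set.mem_union, Set.mem_insert_iff,
    Set.mem_singleton_iff, Set.mem_prod, Set.mem_Icc, Prod.mk.injEq]
  omega

lemma exists_pdSumPairs_two_pow_eq {l : ℕ} (hl : 1 ≤ l) :
    ∃ q, pdSumPairs (2 ^ l) = Set.Icc q (q + 1) ×ˢ Set.Icc q (q + 1) := by
  induction l, hl using Nat.le_induction with
  | base => exact ⟨0, pdSumPairs_two⟩
  | succ l _ ih =>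
    obtain ⟨q, hq⟩ := ih
    exact ⟨_, pow_succ' 2 l ▸ pdSumPairs_two_mul_of_eq hq⟩

theorem stmt9 (l : ℕ) (hl : 1 ≤ l) :
    abComplexity xw (2 ^ l) = 4 ∧
    D0 (2 ^ l) = 2 ∧
    M0 (2 ^ (l + 1)) + m0 (2 ^ l) = 2 ^ l ∧
    m0 (2 ^ (l + 1)) + M0 (2 ^ l) = 2 ^ l := by
  obtain ⟨q, hq⟩ := exists_pdSumPairs_two_pow_eq hl
  have hq' := pow_succ' 2 l ▸ pdSumPairs_two_mul_of_eq hq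
  have hn := two_mul_add_two_le_of_pdSumPairs_eq hq
  refine ⟨?_, ?_, ?_, ?_⟩
  · rw [abComplexity_xw_eq_ncard_pdSumPairs, hq, Set.ncard_prod]
    simp [add_assoc]
  · rw [D0, M0_eq_of_pdSumPairs_eq hq, m0_eq_of_pdSumPairs_eq hq]
    omega
  · rw [M0_eq_of_pdSumPairs_eq hq', m0_eq_of_pdSumPairs_eq hq, pow_succ]
    omega
  · rw [m0_eq_of_pdSumPairs_eq hq', M0_eq_of_pdSumPairs_eq hq, pow_succ]
    omega
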